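/- Every finite cofinitary group acting on ℕ with no non-identity element having infinitely many fixed points is not maximal: for any finite cofinitary group G there exists a permutation h ∉ G such that ⟨G ∪ {h}⟩ is cofinitary. Consequently every maximal cofinitary group is infinite. -/

import Mathlib

/-- A subgroup of `S_∞` is cofinitary if each non-identity element has only
finitely many fixed points. -/
def IsCofinitarySubgroup (G : Subgroup (Equiv.Perm ℕ)) : Prop :=
  ∀ g ∈ G, g ≠ 1 → {n : ℕ | g n = n}.Finite

namespace MCG18

open Equiv

variable (G : Subgroup (Equiv.Perm ℕ))

/-- The set of points whose `G`-orbit meets the fixed point set of some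
non-identity element of `G`. -/
def Bad : Set ℕ := {x | ∃ g ∈ G, g ≠ 1 ∧ ∃ a ∈ G, g (a x) = a x}

variable {G}

lemma bad_finite (hcof : IsCofinitarySubgroup G) [Finite G] : (Bad G).Finite := by
  have hsub : Bad G ⊆ ⋃ (g : {g : G // (g : Equiv.Perm ℕ) ≠ 1}) (a : G),
      (fun x => (a : Equiv.Perm ℕ) x) ⁻¹' {n | (g.1 : Equiv.Perm ℕ) n = n} := by
    rintro x ⟨g, hg, hg1, a, ha, hfix⟩
    exact Set.mem_iUnion.2 ⟨⟨⟨g, hg⟩, hg1⟩, Set.mem_iUnion.2 ⟨⟨a, ha⟩, hfix⟩⟩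
  refine Set.Finite.subset ?_ hsub
  refine Set.finite_iUnion fun g => Set.finite_iUnion fun a => ?_
  exact Set.Finite.preimage (Equiv.injective _).injOn (hcof g.1 g.1.2 g.2)

lemma bad_inv (a : G) {x : ℕ} (hx : x ∈ Bad G) : (a : Equiv.Perm ℕ) x ∈ Bad G := by
  obtain ⟨g, hg, hg1, b, hb, hfix⟩ := hx
  refine ⟨g, hg, hg1, b * (a : Equiv.Perm ℕ)⁻¹, mul_mem hb (inv_mem a.2), ?_⟩
  simpa [Equiv.Perm.mul_apply] using hfix

lemma not_bad (a : G) {x : ℕ} (hx : x ∉ Bad G) : (a : Equiv.Perm ℕ) x ∉ Bad G := by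
  intro hc
  have := bad_inv a⁻¹ hc
  simp only [Subgroup.coe_inv, Equiv.Perm.inv_def, Equiv.symm_apply_apply] at this
  exact hx this

lemma free {g : Equiv.Perm ℕ} (hg : g ∈ G) (hg1 : g ≠ 1) {x : ℕ} (hx : x ∉ Bad G) :
    g x ≠ x := fun hc => hx ⟨g, hg, hg1, 1, one_mem G, by simpa using hc⟩

/-- The orbit equivalence relation on the complement of the bad set. -/
def rel (G : Subgroup (Equiv.Perm ℕ)) : Setoid ↥(Bad G)ᶜ where
  r x y := ∃ a : G, (a : Equiv.Perm ℕ) x.1 = y.1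
  iseqv := by
    refine ⟨fun x => ⟨1, by simp⟩, ?_, ?_⟩
    · rintro x y ⟨a, ha⟩
      exact ⟨a⁻¹, by simp [← ha]⟩
    · rintro x y z ⟨a, ha⟩ ⟨b, hb⟩
      exact ⟨b * a, by simp [Equiv.Perm.mul_apply, ha, hb]⟩

lemma rel_def {x y : ↥(Bad G)ᶜ} :
    (rel G).r x y ↔ ∃ a : G, (a : Equiv.Perm ℕ) x.1 = y.1 := Iff.rfl

lemma exists_h (hcof : IsCofinitarySubgroup G) [Finite G] :
    ∃ (Φ : G × ℤ → ℕ) (h : Equiv.Perm ℕ),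
      Function.Injective Φ ∧
      (∀ p, Φ p ∉ Bad G) ∧
      (∀ x, x ∉ Bad G → ∃ p, Φ p = x) ∧
      (∀ (a g : G) (i : ℤ), (a : Equiv.Perm ℕ) (Φ (g, i)) = Φ (a * g, i)) ∧
      (∀ x ∈ Bad G, h x = x) ∧
      (∀ (g : G) (i : ℤ), h (Φ (g, i)) = Φ (g, i + 1)) := by
  classical
  have hbad : (Bad G).Finite := bad_finite hcof
  have hCinf : ((Bad G)ᶜ : Set ℕ).Infinite := hbad.infinite_compl
  haveI : Infinite ↥(Bad G)ᶜ := hCinf.to_subtype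
  letI srel : Setoid ↥(Bad G)ᶜ := rel G
  -- representative-and-translator data
  have hout : ∀ x : ↥(Bad G)ᶜ, ∃ a : G,
      (a : Equiv.Perm ℕ) ((⟦x⟧ : Quotient srel).out).1 = x.1 := fun x =>
    rel_def.mp (Quotient.exact (Quotient.out_eq (⟦x⟧ : Quotient srel)))
  haveI hQcount : Countable (Quotient srel) := Quotient.countable
  haveI hQinf : Infinite (Quotient srel) := by
    have hj : Function.Injective
        (fun x : ↥(Bad G)ᶜ => ((⟦x⟧ : Quotient srel), Classical.choose (hout x))) := by
      intro x y hxy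
      obtain ⟨h1, h2⟩ := Prod.ext_iff.mp hxy
      dsimp only at h1 h2
      have hx := Classical.choose_spec (hout x)
      have hy := Classical.choose_spec (hout y)
      refine Subtype.ext ?_
      rw [← hx, h2, congrArg Quotient.out h1]
      exact hy
    haveI := Infinite.of_injective _ hj
    by_contra hfin
    rw [not_infinite_iff_finite] at hfin
    exact not_finite (Quotient srel × G)
  obtain ⟨eN⟩ : Nonempty (Quotient srel ≃ ℕ) := nonempty_equiv_of_countable
  let eZ : Quotient srel ≃ ℤ := eN.trans (Denumerable.eqv ℤ).symm
  let Φ : G × ℤ → ℕ := fun p => (p.1 : Equiv.Perm ℕ) ((eZ.symm p.2).out).1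
  have hΦnb : ∀ p, Φ p ∉ Bad G := by
    rintro ⟨g, i⟩
    exact not_bad g ((eZ.symm i).out).2
  have hΦequiv : ∀ (a g : G) (i : ℤ), (a : Equiv.Perm ℕ) (Φ (g, i)) = Φ (a * g, i) := by
    intro a g i
    simp [Φ, Equiv.Perm.mul_apply]
  have hΦinj : Function.Injective Φ := by
    rintro ⟨g, i⟩ ⟨g', i'⟩ hp
    simp only [Φ] at hp
    have hrel : srel.r ((eZ.symm i).out) ((eZ.symm i').out) := by
      refine rel_def.mpr ⟨g'⁻¹ * g, ?_⟩
      simp [Equiv.Perm.mul_apply, hp]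
    have hq : eZ.symm i = eZ.symm i' := by
      have := Quotient.sound (s := srel) hrel
      rwa [Quotient.out_eq, Quotient.out_eq] at this
    have hii : i = i' := eZ.symm.injective hq
    subst hii
    rw [hq] at hp
    have hfixpt : ((g'⁻¹ * g : G) : Equiv.Perm ℕ) ((eZ.symm i).out).1
        = ((eZ.symm i).out).1 := by
      simp [Equiv.Perm.mul_apply, hp]
    have hone : ((g'⁻¹ * g : G) : Equiv.Perm ℕ) = 1 := by
      by_contra hne
      exact free (g'⁻¹ * g).2 hne ((eZ.symm i).out).2 hfixpt
    have : g'⁻¹ * g = 1 := Subtype.ext (by simpa using hone)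
    have hgg : g = g' := (inv_mul_eq_one.mp this).symm
    simp [hgg]
  have hΦsurj : ∀ x, x ∉ Bad G → ∃ p, Φ p = x := by
    intro x hx
    obtain ⟨a, ha⟩ := hout ⟨x, hx⟩
    refine ⟨(a, eZ ⟦(⟨x, hx⟩ : ↥(Bad G)ᶜ)⟧), ?_⟩
    simp only [Φ, Equiv.symm_apply_apply]
    exact ha
  -- the shift permutation
  let f : ℕ → ℕ := fun x =>
    if hx : x ∈ Bad G then x
    else Φ ((Classical.choose (hΦsurj x hx)).1, (Classical.choose (hΦsurj x hx)).2 + 1)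
  have hf1 : ∀ x ∈ Bad G, f x = x := fun x hx => by simp [f, hx]
  have hf2 : ∀ p, f (Φ p) = Φ (p.1, p.2 + 1) := by
    intro p
    have hnb := hΦnb p
    simp only [f, dif_neg hnb]
    have hs := Classical.choose_spec (hΦsurj (Φ p) hnb)
    have hp : Classical.choose (hΦsurj (Φ p) hnb) = p := hΦinj hs
    rw [hp]
  have hbij : Function.Bijective f := by
    constructor
    · intro x y hxy
      by_cases hx : x ∈ Bad G <;> by_cases hy : y ∈ Bad G
      · rwa [hf1 x hx, hf1 y hy] at hxy
      · obtain ⟨p, rfl⟩ := hΦsurj y hy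
        rw [hf1 x hx, hf2 p] at hxy
        exact absurd (hxy ▸ hx) (hΦnb _)
      · obtain ⟨p, rfl⟩ := hΦsurj x hx
        rw [hf1 y hy, hf2 p] at hxy
        exact absurd (hxy ▸ hy) (hΦnb _)
      · obtain ⟨p, rfl⟩ := hΦsurj x hx
        obtain ⟨q, rfl⟩ := hΦsurj y hy
        rw [hf2 p, hf2 q] at hxy
        obtain ⟨h1, h2⟩ := Prod.ext_iff.mp (hΦinj hxy)
        have h2' : p.2 = q.2 := by simpa using h2
        have hpq : p = q := Prod.ext h1 h2'
        rw [hpq]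
    · intro y
      by_cases hy : y ∈ Bad G
      · exact ⟨y, hf1 y hy⟩
      · obtain ⟨q, rfl⟩ := hΦsurj y hy
        refine ⟨Φ (q.1, q.2 - 1), ?_⟩
        rw [hf2 (q.1, q.2 - 1)]
        simp
  refine ⟨Φ, Equiv.ofBijective f hbij, hΦinj, hΦnb, hΦsurj, hΦequiv, ?_, ?_⟩
  · intro x hx
    simpa [Equiv.ofBijective_apply] using hf1 x hx
  · intro g i
    simpa [Equiv.ofBijective_apply] using hf2 (g, i)

lemma key (hcof : IsCofinitarySubgroup G) [Finite G] :
    ∃ h : Equiv.Perm ℕ, h ∉ G ∧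
      IsCofinitarySubgroup (Subgroup.closure ((G : Set (Equiv.Perm ℕ)) ∪ {h})) := by
  classical
  obtain ⟨Φ, h, hinj, hnb, hsurj, hequiv, hfix, hshift⟩ := exists_h hcof
  -- inverse shift
  have hinvfix : ∀ x ∈ Bad G, h⁻¹ x = x := fun x hx =>
    h.injective (by rw [Equiv.Perm.inv_def, Equiv.apply_symm_apply, hfix x hx])
  have hinvshift : ∀ (g : G) (i : ℤ), h⁻¹ (Φ (g, i)) = Φ (g, i - 1) := fun g i =>
    h.injective (by rw [Equiv.Perm.inv_def, Equiv.apply_symm_apply, hshift, sub_add_cancel])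
  -- integer powers of the shift
  have hz : ∀ n : ℤ, (∀ x ∈ Bad G, (h ^ n) x = x) ∧
      ∀ (g : G) (i : ℤ), (h ^ n) (Φ (g, i)) = Φ (g, i + n) := by
    intro n
    induction n using Int.induction_on with
    | zero => simp
    | succ k ih =>
      have hk : h ^ ((k : ℤ) + 1) = h ^ (k : ℤ) * h := zpow_add_one h k
      constructor
      · intro x hx
        rw [hk, Equiv.Perm.mul_apply, hfix x hx, ih.1 x hx]
      · intro g i
        rw [hk, Equiv.Perm.mul_apply, hshift, ih.2]
        ring_nf
    | pred k ih =>
      have hk : h ^ (-(k : ℤ) - 1) = h ^ (-(k : ℤ)) * h⁻¹ := by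
        rw [← zpow_neg_one, ← zpow_add, sub_eq_add_neg]
      constructor
      · intro x hx
        rw [hk, Equiv.Perm.mul_apply, hinvfix x hx, ih.1 x hx]
      · intro g i
        rw [hk, Equiv.Perm.mul_apply, hinvshift, ih.2]
        ring_nf
  -- commutation
  have hcomm : ∀ a : G, Commute (a : Equiv.Perm ℕ) h := by
    intro a
    apply Equiv.ext
    intro x
    by_cases hx : x ∈ Bad G
    · rw [Equiv.Perm.mul_apply, Equiv.Perm.mul_apply, hfix x hx,
        hfix _ (bad_inv a hx)]
    · obtain ⟨⟨g, i⟩, rfl⟩ := hsurj x hx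
      rw [Equiv.Perm.mul_apply, Equiv.Perm.mul_apply, hshift, hequiv, hequiv, hshift]
  -- h is not in G
  have hnotin : h ∉ (G : Subgroup (Equiv.Perm ℕ)) := by
    intro hmem
    have h0 := hshift 1 0
    have h1 := hequiv ⟨h, hmem⟩ 1 0
    rw [h0] at h1
    obtain ⟨-, h2⟩ := Prod.ext_iff.mp (hinj h1)
    simp at h2
  -- the subgroup of products g * h^n
  let S : Subgroup (Equiv.Perm ℕ) :=
    { carrier := {z | ∃ (g : G) (n : ℤ), z = (g : Equiv.Perm ℕ) * h ^ n}
      one_mem' := ⟨1, 0, by simp⟩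
      mul_mem' := by
        rintro x y ⟨g, n, rfl⟩ ⟨g', m, rfl⟩
        refine ⟨g * g', n + m, ?_⟩
        have hc : h ^ n * (g' : Equiv.Perm ℕ) = (g' : Equiv.Perm ℕ) * h ^ n :=
          ((hcomm g').zpow_right n).eq.symm
        rw [Subgroup.coe_mul, zpow_add, mul_assoc, mul_assoc]
        congr 1
        rw [← mul_assoc, hc, mul_assoc]
      inv_mem' := by
        rintro x ⟨g, n, rfl⟩
        refine ⟨g⁻¹, -n, ?_⟩
        rw [mul_inv_rev, ← zpow_neg, ((hcomm g⁻¹).zpow_right (-n)).eq, Subgroup.coe_inv] }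
  have hle : Subgroup.closure ((G : Set (Equiv.Perm ℕ)) ∪ {h}) ≤ S := by
    rw [Subgroup.closure_le]
    rintro z (hz | hz)
    · exact ⟨⟨z, hz⟩, 0, by simp⟩
    · rw [Set.mem_singleton_iff] at hz
      exact ⟨1, 1, by simp [hz]⟩
  refine ⟨h, hnotin, ?_⟩
  intro z hzmem hz1
  obtain ⟨g, n, rfl⟩ := hle hzmem
  by_cases hn : n = 0
  · subst hn
    simp only [zpow_zero, mul_one] at hz1 ⊢
    exact hcof (g : Equiv.Perm ℕ) g.2 hz1
  · refine Set.Finite.subset (bad_finite hcof) ?_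
    intro x hx
    by_contra hxb
    obtain ⟨⟨g₀, i⟩, rfl⟩ := hsurj x hxb
    have hx' : ((g : Equiv.Perm ℕ) * h ^ n) (Φ (g₀, i)) = Φ (g₀, i) := hx
    rw [Equiv.Perm.mul_apply, (hz n).2, hequiv] at hx'
    obtain ⟨-, h2⟩ := Prod.ext_iff.mp (hinj hx')
    simp only at h2
    exact hn (by linarith)

end MCG18

/-- No finite cofinitary group is maximal: any finite cofinitary group `G` can
be extended by some `h ∉ G` so that `⟨G ∪ {h}⟩` is cofinitary. Consequently
every maximal cofinitary group is infinite. -/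
theorem stmt18 :
    (∀ G : Subgroup (Equiv.Perm ℕ), IsCofinitarySubgroup G → Finite G →
      ∃ h : Equiv.Perm ℕ, h ∉ G ∧
        IsCofinitarySubgroup (Subgroup.closure ((G : Set (Equiv.Perm ℕ)) ∪ {h}))) ∧
    (∀ G : Subgroup (Equiv.Perm ℕ), IsCofinitarySubgroup G →
      (∀ H : Subgroup (Equiv.Perm ℕ), IsCofinitarySubgroup H → G ≤ H → G = H) →
      Infinite G) := by
  constructor
  · intro G hcof hfin
    haveI := hfin
    exact MCG18.key hcof
  · intro G hcof hmax
    by_contra hinf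
    rw [not_infinite_iff_finite] at hinf
    haveI := hinf
    obtain ⟨h, hnot, hcofC⟩ := MCG18.key hcof
    have hGH : G ≤ Subgroup.closure ((G : Set (Equiv.Perm ℕ)) ∪ {h}) :=
      fun x hx => Subgroup.subset_closure (Or.inl hx)
    have heq := hmax _ hcofC hGH
    exact hnot (heq ▸ Subgroup.subset_closure (Or.inr rfl))
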